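/- arXiv:1810.13174 — 4 statements merged into one kernel-verified Lean document; each statement's English description precedes it below -/
import Mathlib

section
/- For every complex number r, the determinant of the 2×2 complex matrix [[(λ+2μ)r² + ρω² − μk², ik(μ+λ)r], [ik(μ+λ)r, μr² + ρω² − (λ+2μ)k²]] equals μ(λ+2μ)(r² − λ₁²)(r² − λ₂²); in particular this determinant vanishes exactly when r ∈ {λ₁, −λ₁, λ₂, −λ₂}. -/
/-!
Expanding the determinant with `i² = -1` gives `(μ(r² - k²) + ρω²)((λ + 2μ)(r² - k²) + ρω²)`.
Since `Cs² = μ/ρ`, `Cp² = (λ + 2μ)/ρ` and the principal square root squares back to its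
argument, the two factors are `μ(r² - λ₁²)` and `(λ + 2μ)(r² - λ₂²)`; each vanishes exactly
at `r = ±λⱼ`.
-/

open Complex Matrix

/-- The Fourier-transformed Navier symbol matrix in the root variable `r`. -/
noncomputable def navierMat (μ lam ρ ω k : ℝ) (r : ℂ) : Matrix (Fin 2) (Fin 2) ℂ :=
  !![((lam : ℂ) + 2 * (μ : ℂ)) * r ^ 2 + (ρ : ℂ) * (ω : ℂ) ^ 2 - (μ : ℂ) * (k : ℂ) ^ 2,
      Complex.I * (k : ℂ) * ((μ : ℂ) + (lam : ℂ)) * r;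
      Complex.I * (k : ℂ) * ((μ : ℂ) + (lam : ℂ)) * r,
      (μ : ℂ) * r ^ 2 + (ρ : ℂ) * (ω : ℂ) ^ 2 - ((lam : ℂ) + 2 * (μ : ℂ)) * (k : ℂ) ^ 2]

theorem navierMat_det (μ lam ρ ω k : ℝ) (r : ℂ) :
    (navierMat μ lam ρ ω k r).det =
      ((μ : ℂ) * (r ^ 2 - (k : ℂ) ^ 2) + (ρ : ℂ) * (ω : ℂ) ^ 2) *
        (((lam : ℂ) + 2 * (μ : ℂ)) * (r ^ 2 - (k : ℂ) ^ 2) + (ρ : ℂ) * (ω : ℂ) ^ 2) := by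
  rw [navierMat, det_fin_two_of]
  linear_combination (-(k : ℂ) ^ 2 * ((μ : ℂ) + lam) ^ 2 * r ^ 2) * I_sq

theorem Complex.cpow_one_half_sq (z : ℂ) : (z ^ (1 / 2 : ℂ)) ^ 2 = z := by
  simp

theorem div_sq_wave_speed {a ρ : ℝ} (ha : 0 ≤ a) (hρ : 0 ≤ ρ) (ω : ℝ) :
    ω ^ 2 / Real.sqrt (a / ρ) ^ 2 = ρ * ω ^ 2 / a := by
  rw [Real.sq_sqrt (div_nonneg ha hρ), div_div_eq_mul_div, mul_comm]

theorem mul_sub_sq_cpow_one_half_wave_number {a ρ : ℝ} (ha : 0 < a) (hρ : 0 ≤ ρ) (ω k : ℝ)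
    (r : ℂ) :
    (a : ℂ) * (r ^ 2 - (((k ^ 2 - ω ^ 2 / Real.sqrt (a / ρ) ^ 2 : ℝ) : ℂ) ^ (1 / 2 : ℂ)) ^ 2) =
      a * (r ^ 2 - (k : ℂ) ^ 2) + ρ * (ω : ℂ) ^ 2 := by
  have ha0 : (a : ℂ) ≠ 0 := by exact_mod_cast ha.ne'
  rw [cpow_one_half_sq, div_sq_wave_speed ha.le hρ]
  push_cast
  field_simp
  ring

theorem navier_symbol_det_general
    (μ lam ρ ω : ℝ) (hμ : 0 < μ) (hlam : 0 < lam) (hρ : 0 < ρ)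
    (Cp Cs : ℝ) (hCp : Cp = Real.sqrt ((lam + 2 * μ) / ρ)) (hCs : Cs = Real.sqrt (μ / ρ))
    (k : ℝ)
    (l1 l2 : ℂ)
    (hl1 : l1 = ((k ^ 2 - ω ^ 2 / Cs ^ 2 : ℝ) : ℂ) ^ (1 / 2 : ℂ))
    (hl2 : l2 = ((k ^ 2 - ω ^ 2 / Cp ^ 2 : ℝ) : ℂ) ^ (1 / 2 : ℂ)) :
    ∀ r : ℂ,
      (navierMat μ lam ρ ω k r).det
          = (μ : ℂ) * ((lam : ℂ) + 2 * (μ : ℂ)) * (r ^ 2 - l1 ^ 2) * (r ^ 2 - l2 ^ 2)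
        ∧ ((navierMat μ lam ρ ω k r).det = 0 ↔ r = l1 ∨ r = -l1 ∨ r = l2 ∨ r = -l2) := by
  intro r
  have hP : 0 < lam + 2 * μ := by linarith
  have hμ0 : (μ : ℂ) ≠ 0 := by exact_mod_cast hμ.ne'
  have hP0 : (lam : ℂ) + 2 * (μ : ℂ) ≠ 0 := by exact_mod_cast hP.ne'
  have hdet : (navierMat μ lam ρ ω k r).det
      = (μ : ℂ) * ((lam : ℂ) + 2 * (μ : ℂ)) * (r ^ 2 - l1 ^ 2) * (r ^ 2 - l2 ^ 2) := by
    have hshear := mul_sub_sq_cpow_one_half_wave_number hμ hρ.le ω k r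
    have hpressure := mul_sub_sq_cpow_one_half_wave_number hP hρ.le ω k r
    rw [ofReal_add, ofReal_mul, ofReal_ofNat] at hpressure
    rw [navierMat_det, ← hshear, ← hpressure, hl1, hl2, hCs, hCp]
    ring
  refine ⟨hdet, ?_⟩
  simp only [hdet, mul_eq_zero, hμ0, hP0, false_or, sub_eq_zero, sq_eq_sq_iff_eq_or_eq_neg,
    or_assoc]

/-- the determinant of the Navier symbol matrix factorizes as
`μ(λ+2μ)(r² − λ₁²)(r² − λ₂²)`, hence vanishes exactly at `r ∈ {λ₁, −λ₁, λ₂, −λ₂}`. -/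
theorem navier_symbol_det
    (μ lam ρ ω : ℝ) (hμ : 0 < μ) (hlam : 0 < lam) (hρ : 0 < ρ) (hω : 0 < ω)
    (Cp Cs : ℝ) (hCp : Cp = Real.sqrt ((lam + 2 * μ) / ρ)) (hCs : Cs = Real.sqrt (μ / ρ))
    (k : ℝ)
    (l1 l2 : ℂ)
    (hl1 : l1 = ((k ^ 2 - ω ^ 2 / Cs ^ 2 : ℝ) : ℂ) ^ (1 / 2 : ℂ))
    (hl2 : l2 = ((k ^ 2 - ω ^ 2 / Cp ^ 2 : ℝ) : ℂ) ^ (1 / 2 : ℂ)) :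
    ∀ r : ℂ,
      (navierMat μ lam ρ ω k r).det
          = (μ : ℂ) * ((lam : ℂ) + 2 * (μ : ℂ)) * (r ^ 2 - l1 ^ 2) * (r ^ 2 - l2 ^ 2)
        ∧ ((navierMat μ lam ρ ω k r).det = 0 ↔ r = l1 ∨ r = -l1 ∨ r = l2 ∨ r = -l2) :=
  navier_symbol_det_general μ lam ρ ω hμ hlam hρ Cp Cs hCp hCs k l1 l2 hl1 hl2
end

section
/- Assume k² + λ₁λ₂ ≠ 0 and λ₂ ≠ 0, and let δ ≥ 0. Setting X₁ = (k² + λ₁λ₂)/(k² − λ₁λ₂) and X₂ = −2ikλ₂/(k² − λ₁λ₂), the Schwarz iteration matrix R_δ = M_δ⁻¹ N_δ N_0⁻¹ M_0 equals the explicit matrix [[e^{−δ(λ₁+λ₂)} X₂² (λ₁/λ₂) + e^{−2λ₁δ} X₁², X₁X₂ (e^{−2λ₁δ} − e^{−δ(λ₁+λ₂)})], [X₁X₂ (λ₁/λ₂)(e^{−δ(λ₁+λ₂)} − e^{−2λ₂δ}), e^{−δ(λ₁+λ₂)} X₂² (λ₁/λ₂) + e^{−2λ₂δ} X₁²]]. 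-/
open Complex Matrix

/-- The matrix `M_x` whose columns are the two bounded-at `-∞` exponential solutions. -/
noncomputable def Mmat (l1 l2 : ℂ) (k : ℝ) (x : ℝ) : Matrix (Fin 2) (Fin 2) ℂ :=
  !![Complex.exp (l1 * x), -(Complex.I * l2 / (k : ℂ)) * Complex.exp (l2 * x);
     (Complex.I * l1 / (k : ℂ)) * Complex.exp (l1 * x), Complex.exp (l2 * x)]

/-- The matrix `N_x` whose columns are the two bounded-at `+∞` exponential solutions. -/
noncomputable def Nmat (l1 l2 : ℂ) (k : ℝ) (x : ℝ) : Matrix (Fin 2) (Fin 2) ℂ :=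
  !![Complex.exp (-l1 * x), (Complex.I * l2 / (k : ℂ)) * Complex.exp (-l2 * x);
     -(Complex.I * l1 / (k : ℂ)) * Complex.exp (-l1 * x), Complex.exp (-l2 * x)]

/-!
Both `M_x` and `N_x` factor through their values at `0`: `M_x = M₀ E_x` and `N_x = N₀ E_x⁻¹` with
`E_x = diag(e^{λ₁x}, e^{λ₂x})`, so `R_δ = E_δ⁻¹ (M₀⁻¹ N₀) E_δ⁻¹ (N₀⁻¹ M₀)`. Since `N₀` is the
adjugate of `M₀`, `M₀⁻¹ N₀ = N₀² / det M₀ = [[X₁, -X₂], [X₂ λ₁/λ₂, X₁]]`; replacing `k` by `-k`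
swaps `M₀` and `N₀` and changes the sign of `X₂`, which gives `N₀⁻¹ M₀`. Multiplying out the four
factors yields the formula.
-/

lemma inv_diagonal_exp (a b : ℂ) :
    (diagonal ![exp a, exp b])⁻¹ = diagonal ![exp (-a), exp (-b)] := by
  refine inv_eq_left_inv ?_
  rw [diagonal_mul_diagonal, ← diagonal_one]
  congr 1
  ext i
  fin_cases i <;> simp [← exp_add]

section
variable (l1 l2 : ℂ) (k : ℝ)

lemma Mmat_eq_mul_diagonal (x : ℝ) :
    Mmat l1 l2 k x = Mmat l1 l2 k 0 * diagonal ![exp (l1 * x), exp (l2 * x)] := by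
  ext i j
  fin_cases i <;> fin_cases j <;> simp [Mmat]

lemma Nmat_eq_mul_diagonal (x : ℝ) :
    Nmat l1 l2 k x = Nmat l1 l2 k 0 * diagonal ![exp (-(l1 * x)), exp (-(l2 * x))] := by
  ext i j
  fin_cases i <;> fin_cases j <;> simp [Nmat]

lemma Mmat_zero_neg : Mmat l1 l2 (-k) 0 = Nmat l1 l2 k 0 := by
  simp [Mmat, Nmat, div_neg]

lemma Nmat_zero_neg : Nmat l1 l2 (-k) 0 = Mmat l1 l2 k 0 := by
  simp [Mmat, Nmat, div_neg]

lemma adjugate_Mmat_zero : (Mmat l1 l2 k 0).adjugate = Nmat l1 l2 k 0 := by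
  simp [Mmat, Nmat, adjugate_fin_two_of]

variable {k}

lemma det_Mmat_zero (hk : k ≠ 0) : (Mmat l1 l2 k 0).det = (k ^ 2 - l1 * l2) / k ^ 2 := by
  have hk' : (k : ℂ) ≠ 0 := ofReal_ne_zero.mpr hk
  simp only [Mmat, ofReal_zero, mul_zero, exp_zero, mul_one, det_fin_two_of, neg_mul, sub_neg_eq_add]
  field_simp
  linear_combination l1 * l2 * I_sq

lemma smul_Nmat_zero_mul_self (hk : k ≠ 0) :
    (k : ℂ) ^ 2 • (Nmat l1 l2 k 0 * Nmat l1 l2 k 0)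
      = !![k ^ 2 + l1 * l2, 2 * I * k * l2; -(2 * I * k * l1), k ^ 2 + l1 * l2] := by
  have hk' : (k : ℂ) ≠ 0 := ofReal_ne_zero.mpr hk
  ext i j
  fin_cases i <;> fin_cases j <;> simp [Nmat] <;> field_simp <;> ring_nf <;> simp [I_sq]

/- No invertibility hypothesis is needed: if `k² = l1 l2` then `det M₀ = 0`, and both sides
vanish because `Ring.inverse 0 = 0` and `x / 0 = 0`. -/
lemma inv_Mmat_zero_mul_Nmat_zero (hk : k ≠ 0) (hl2 : l2 ≠ 0) {X1 X2 : ℂ}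
    (hX1 : X1 = ((k : ℂ) ^ 2 + l1 * l2) / ((k : ℂ) ^ 2 - l1 * l2))
    (hX2 : X2 = -(2 * I * (k : ℂ) * l2) / ((k : ℂ) ^ 2 - l1 * l2)) :
    (Mmat l1 l2 k 0)⁻¹ * Nmat l1 l2 k 0 = !![X1, -X2; X2 * (l1 / l2), X1] := by
  rw [Matrix.inv_def, adjugate_Mmat_zero, det_Mmat_zero l1 l2 hk, Ring.inverse_eq_inv', inv_div,
    smul_mul_assoc, div_eq_inv_mul, mul_smul, smul_Nmat_zero_mul_self l1 l2 hk, hX1, hX2]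
  ext i j
  fin_cases i <;> fin_cases j <;> simp <;> field_simp

lemma inv_Nmat_zero_mul_Mmat_zero (hk : k ≠ 0) (hl2 : l2 ≠ 0) {X1 X2 : ℂ}
    (hX1 : X1 = ((k : ℂ) ^ 2 + l1 * l2) / ((k : ℂ) ^ 2 - l1 * l2))
    (hX2 : X2 = -(2 * I * (k : ℂ) * l2) / ((k : ℂ) ^ 2 - l1 * l2)) :
    (Nmat l1 l2 k 0)⁻¹ * Mmat l1 l2 k 0 = !![X1, X2; -(X2 * (l1 / l2)), X1] := by
  have h := inv_Mmat_zero_mul_Nmat_zero l1 l2 (neg_ne_zero.2 hk) hl2 (X1 := X1) (X2 := -X2)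
    (by rw [hX1]; push_cast; ring) (by rw [hX2]; push_cast; ring)
  rwa [Mmat_zero_neg, Nmat_zero_neg, neg_neg, neg_mul] at h

end

theorem schwarz_iteration_matrix_explicit_general
    (k : ℝ) (hk : k ≠ 0)
    (l1 l2 : ℂ)
    (hl2ne : l2 ≠ 0)
    (δ : ℝ)
    (X1 X2 : ℂ)
    (hX1 : X1 = ((k : ℂ) ^ 2 + l1 * l2) / ((k : ℂ) ^ 2 - l1 * l2))
    (hX2 : X2 = -(2 * Complex.I * (k : ℂ) * l2) / ((k : ℂ) ^ 2 - l1 * l2)) :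
    (Mmat l1 l2 k δ)⁻¹ * Nmat l1 l2 k δ * (Nmat l1 l2 k 0)⁻¹ * Mmat l1 l2 k 0
      = !![Complex.exp (-(δ : ℂ) * (l1 + l2)) * X2 ^ 2 * (l1 / l2)
              + Complex.exp (-2 * l1 * δ) * X1 ^ 2,
            X1 * X2 * (Complex.exp (-2 * l1 * δ) - Complex.exp (-(δ : ℂ) * (l1 + l2)));
            X1 * X2 * (l1 / l2)
              * (Complex.exp (-(δ : ℂ) * (l1 + l2)) - Complex.exp (-2 * l2 * δ)),
            Complex.exp (-(δ : ℂ) * (l1 + l2)) * X2 ^ 2 * (l1 / l2)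
              + Complex.exp (-2 * l2 * δ) * X1 ^ 2] := by
  rw [Mmat_eq_mul_diagonal _ _ _ δ, Nmat_eq_mul_diagonal _ _ _ δ, ← inv_diagonal_exp,
    Matrix.mul_inv_rev]
  set E := diagonal ![exp (l1 * δ), exp (l2 * δ)]
  set M₀ := Mmat l1 l2 k 0
  set N₀ := Nmat l1 l2 k 0
  rw [show E⁻¹ * M₀⁻¹ * (N₀ * E⁻¹) * N₀⁻¹ * M₀ = E⁻¹ * (M₀⁻¹ * N₀) * E⁻¹ * (N₀⁻¹ * M₀) by
      simp only [Matrix.mul_assoc],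
    inv_Mmat_zero_mul_Nmat_zero l1 l2 hk hl2ne hX1 hX2,
    inv_Nmat_zero_mul_Mmat_zero l1 l2 hk hl2ne hX1 hX2, inv_diagonal_exp]
  have h1 : exp (-2 * l1 * δ) = exp (-(l1 * δ)) ^ 2 := by rw [← exp_nat_mul]; ring_nf
  have h2 : exp (-2 * l2 * δ) = exp (-(l2 * δ)) ^ 2 := by rw [← exp_nat_mul]; ring_nf
  have h12 : exp (-(δ : ℂ) * (l1 + l2)) = exp (-(l1 * δ)) * exp (-(l2 * δ)) := by
    rw [← exp_add]; ring_nf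
  rw [h1, h2, h12]
  ext i j
  fin_cases i <;> fin_cases j <;> simp [mul_apply, Fin.sum_univ_two] <;> ring

/-- the Schwarz iteration matrix `R_δ = M_δ⁻¹ N_δ N_0⁻¹ M_0` equals the
explicit matrix of the paper, with `X₁ = (k²+λ₁λ₂)/(k²−λ₁λ₂)` and
`X₂ = −2ikλ₂/(k²−λ₁λ₂)`. -/
theorem schwarz_iteration_matrix_explicit
    (μ lam ρ ω : ℝ) (hμ : 0 < μ) (hlam : 0 < lam) (hρ : 0 < ρ) (hω : 0 < ω)
    (Cp Cs : ℝ) (hCp : Cp = Real.sqrt ((lam + 2 * μ) / ρ)) (hCs : Cs = Real.sqrt (μ / ρ))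
    (k : ℝ) (hk : k ≠ 0)
    (l1 l2 : ℂ)
    (hl1 : l1 = ((k ^ 2 - ω ^ 2 / Cs ^ 2 : ℝ) : ℂ) ^ (1 / 2 : ℂ))
    (hl2 : l2 = ((k ^ 2 - ω ^ 2 / Cp ^ 2 : ℝ) : ℂ) ^ (1 / 2 : ℂ))
    (hadm : (k : ℂ) ^ 2 + l1 * l2 ≠ 0) (hl2ne : l2 ≠ 0)
    (δ : ℝ) (hδ : 0 ≤ δ)
    (X1 X2 : ℂ)
    (hX1 : X1 = ((k : ℂ) ^ 2 + l1 * l2) / ((k : ℂ) ^ 2 - l1 * l2))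
    (hX2 : X2 = -(2 * Complex.I * (k : ℂ) * l2) / ((k : ℂ) ^ 2 - l1 * l2)) :
    (Mmat l1 l2 k δ)⁻¹ * Nmat l1 l2 k δ * (Nmat l1 l2 k 0)⁻¹ * Mmat l1 l2 k 0
      = !![Complex.exp (-(δ : ℂ) * (l1 + l2)) * X2 ^ 2 * (l1 / l2)
              + Complex.exp (-2 * l1 * δ) * X1 ^ 2,
            X1 * X2 * (Complex.exp (-2 * l1 * δ) - Complex.exp (-(δ : ℂ) * (l1 + l2)));
            X1 * X2 * (l1 / l2)
              * (Complex.exp (-(δ : ℂ) * (l1 + l2)) - Complex.exp (-2 * l2 * δ)),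
            Complex.exp (-(δ : ℂ) * (l1 + l2)) * X2 ^ 2 * (l1 / l2)
              + Complex.exp (-2 * l2 * δ) * X1 ^ 2] :=
  schwarz_iteration_matrix_explicit_general k hk l1 l2 hl2ne δ X1 X2 hX1 hX2
end

section
/- In the non-overlapping case δ = 0 one has X = 0 and r₊ = r₋ = 1, and the Schwarz iteration matrix satisfies R_0 = M_0⁻¹ N_0 N_0⁻¹ M_0 = Id; consequently the convergence factor satisfies ρ_cla(k, ω, Cp, Cs, 0) = max(|r₊|, |r₋|) = 1 for every admissible k, i.e. the non-overlapping classical Schwarz algorithm stagnates. -/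
/-!
At `δ = 0` both exponential differences vanish, so `X = 0` and `r± = e⁰ = 1`, and `R_0` collapses
to `M_0⁻¹ M_0 = 1` as soon as `M_0` and `N_0` are invertible. Both determinants equal
`1 - λ₁λ₂/k²`, and `λ₁λ₂ ≠ k²` because `λ₁² < k²`, `λ₂² ≤ k²` and the principal square root of a
negative real lies on the positive imaginary axis.
-/

open Complex Matrix

namespace Complex

theorem ofReal_cpow_half_of_nonneg {t : ℝ} (ht : 0 ≤ t) : (t : ℂ) ^ (1 / 2 : ℂ) = √t := by
  rw [Real.sqrt_eq_rpow, ofReal_cpow ht]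
  norm_num

theorem ofReal_cpow_half_of_nonpos {t : ℝ} (ht : t ≤ 0) :
    (t : ℂ) ^ (1 / 2 : ℂ) = I * √(-t) := by
  have hI : exp (Real.pi * I * (1 / 2)) = I := by
    rw [show (Real.pi : ℂ) * I * (1 / 2) = (Real.pi / 2 : ℝ) * I by push_cast; ring, exp_mul_I]
    simp
  rw [ofReal_cpow_of_nonpos ht, ← ofReal_neg, ofReal_cpow_half_of_nonneg (by linarith), hI,
    mul_comm]

theorem ofReal_cpow_half_mul_ne {t s K : ℝ} (hK : 0 < K) (ht : t < K) (hs : s ≤ K) :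
    (t : ℂ) ^ (1 / 2 : ℂ) * (s : ℂ) ^ (1 / 2 : ℂ) ≠ K := by
  intro h
  rcases le_total 0 t with ht0 | ht0 <;> rcases le_total 0 s with hs0 | hs0
  · rw [ofReal_cpow_half_of_nonneg ht0, ofReal_cpow_half_of_nonneg hs0, ← ofReal_mul,
      ofReal_inj] at h
    have hK' : 0 < √K := Real.sqrt_pos.2 hK
    have : √t * √s < √K * √K :=
      calc √t * √s ≤ √t * √K := by gcongr
        _ < √K * √K := by gcongr
    rw [Real.mul_self_sqrt hK.le] at this
    linarith
  · rw [ofReal_cpow_half_of_nonneg ht0, ofReal_cpow_half_of_nonpos hs0] at h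
    exact hK.ne (by simpa using congrArg re h)
  · rw [ofReal_cpow_half_of_nonpos ht0, ofReal_cpow_half_of_nonneg hs0] at h
    exact hK.ne (by simpa using congrArg re h)
  · rw [ofReal_cpow_half_of_nonpos ht0, ofReal_cpow_half_of_nonpos hs0] at h
    have := congrArg re h
    simp only [mul_re, I_re, ofReal_re, zero_mul, I_im, ofReal_im, mul_zero, sub_self, mul_im,
      one_mul, zero_add, zero_sub] at this
    nlinarith [Real.sqrt_nonneg (-t), Real.sqrt_nonneg (-s)]

end Complex

theorem det_Mmat (l1 l2 : ℂ) (k x : ℝ) :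
    (Mmat l1 l2 k x).det = (1 - l1 * l2 / (k : ℂ) ^ 2) * exp ((l1 + l2) * x) := by
  rw [Mmat, det_fin_two_of, add_mul, exp_add]
  ring_nf
  rw [I_sq]
  ring

theorem det_Nmat (l1 l2 : ℂ) (k x : ℝ) :
    (Nmat l1 l2 k x).det = (1 - l1 * l2 / (k : ℂ) ^ 2) * exp (-(l1 + l2) * x) := by
  rw [Nmat, det_fin_two_of, neg_add, add_mul, exp_add]
  ring_nf
  rw [I_sq]
  ring

theorem one_sub_mul_div_sq_ne_zero {l1 l2 : ℂ} {k : ℝ} (hk : k ≠ 0) (h : l1 * l2 ≠ (k : ℂ) ^ 2) :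
    1 - l1 * l2 / (k : ℂ) ^ 2 ≠ 0 := by
  rwa [sub_ne_zero, ne_comm, ne_eq, div_eq_one_iff_eq (by exact_mod_cast pow_ne_zero 2 hk)]

theorem isUnit_det_Mmat {l1 l2 : ℂ} {k : ℝ} (hk : k ≠ 0) (h : l1 * l2 ≠ (k : ℂ) ^ 2) (x : ℝ) :
    IsUnit (Mmat l1 l2 k x).det := by
  rw [det_Mmat]
  exact (mul_ne_zero (one_sub_mul_div_sq_ne_zero hk h) (exp_ne_zero _)).isUnit

theorem isUnit_det_Nmat {l1 l2 : ℂ} {k : ℝ} (hk : k ≠ 0) (h : l1 * l2 ≠ (k : ℂ) ^ 2) (x : ℝ) :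
    IsUnit (Nmat l1 l2 k x).det := by
  rw [det_Nmat]
  exact (mul_ne_zero (one_sub_mul_div_sq_ne_zero hk h) (exp_ne_zero _)).isUnit

theorem Matrix.nonsing_inv_mul_mul_nonsing_inv_mul {n R : Type*} [Fintype n] [DecidableEq n]
    [CommRing R] {A B : Matrix n n R} (hA : IsUnit A.det) (hB : IsUnit B.det) :
    A⁻¹ * B * B⁻¹ * A = 1 := by
  rw [Matrix.mul_assoc A⁻¹, mul_nonsing_inv B hB, Matrix.mul_one, nonsing_inv_mul A hA]

theorem schwarz_no_overlap_stagnates_general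
    (μ ρ ω : ℝ) (hμ : 0 < μ) (hρ : 0 < ρ) (hω : 0 < ω)
    (Cp Cs : ℝ) (hCs : Cs = Real.sqrt (μ / ρ))
    (k : ℝ) (hk : k ≠ 0)
    (l1 l2 : ℂ)
    (hl1 : l1 = ((k ^ 2 - ω ^ 2 / Cs ^ 2 : ℝ) : ℂ) ^ (1 / 2 : ℂ))
    (hl2 : l2 = ((k ^ 2 - ω ^ 2 / Cp ^ 2 : ℝ) : ℂ) ^ (1 / 2 : ℂ))
    (X E rp rm : ℂ)
    (hX : X = ((k : ℂ) ^ 2 + l1 * l2) / ((k : ℂ) ^ 2 - l1 * l2)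
              * (Complex.exp (-l1 * (0 : ℝ)) - Complex.exp (-l2 * (0 : ℝ))))
    (hE : E = Complex.exp (-((0 : ℝ) : ℂ) * (l1 + l2)))
    (hrp : rp = X ^ 2 / 2 + E + (X ^ 2 * (X ^ 2 + 4 * E)) ^ (1 / 2 : ℂ) / 2)
    (hrm : rm = X ^ 2 / 2 + E - (X ^ 2 * (X ^ 2 + 4 * E)) ^ (1 / 2 : ℂ) / 2) :
    X = 0 ∧ rp = 1 ∧ rm = 1
      ∧ (Mmat l1 l2 k 0)⁻¹ * Nmat l1 l2 k 0 * (Nmat l1 l2 k 0)⁻¹ * Mmat l1 l2 k 0 = 1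
      ∧ max ‖rp‖ ‖rm‖ = 1 := by
  have hX0 : X = 0 := by simp [hX]
  have hE1 : E = 1 := by simp [hE]
  have hr : rp = 1 ∧ rm = 1 := by simp [hrp, hrm, hX0, hE1]
  have hCs0 : 0 < Cs := hCs ▸ Real.sqrt_pos.2 (div_pos hμ hρ)
  have hl12 : l1 * l2 ≠ (k : ℂ) ^ 2 := by
    rw [hl1, hl2, ← ofReal_pow]
    refine ofReal_cpow_half_mul_ne (by positivity) ?_ ?_
    · linarith [show 0 < ω ^ 2 / Cs ^ 2 by positivity]
    · linarith [show 0 ≤ ω ^ 2 / Cp ^ 2 by positivity]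
  refine ⟨hX0, hr.1, hr.2, ?_, by simp [hr]⟩
  exact nonsing_inv_mul_mul_nonsing_inv_mul (isUnit_det_Mmat hk hl12 0) (isUnit_det_Nmat hk hl12 0)

/-- in the non-overlapping case `δ = 0` one has `X = 0`, `r₊ = r₋ = 1`,
`R_0 = M_0⁻¹ N_0 N_0⁻¹ M_0 = Id`, and the convergence factor
`ρ_cla = max(|r₊|, |r₋|) = 1`: the non-overlapping classical Schwarz method stagnates. -/
theorem schwarz_no_overlap_stagnates
    (μ lam ρ ω : ℝ) (hμ : 0 < μ) (hlam : 0 < lam) (hρ : 0 < ρ) (hω : 0 < ω)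
    (Cp Cs : ℝ) (hCp : Cp = Real.sqrt ((lam + 2 * μ) / ρ)) (hCs : Cs = Real.sqrt (μ / ρ))
    (k : ℝ) (hk : k ≠ 0)
    (l1 l2 : ℂ)
    (hl1 : l1 = ((k ^ 2 - ω ^ 2 / Cs ^ 2 : ℝ) : ℂ) ^ (1 / 2 : ℂ))
    (hl2 : l2 = ((k ^ 2 - ω ^ 2 / Cp ^ 2 : ℝ) : ℂ) ^ (1 / 2 : ℂ))
    (hadm : (k : ℂ) ^ 2 + l1 * l2 ≠ 0)
    (X E rp rm : ℂ)
    (hX : X = ((k : ℂ) ^ 2 + l1 * l2) / ((k : ℂ) ^ 2 - l1 * l2)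
              * (Complex.exp (-l1 * (0 : ℝ)) - Complex.exp (-l2 * (0 : ℝ))))
    (hE : E = Complex.exp (-((0 : ℝ) : ℂ) * (l1 + l2)))
    (hrp : rp = X ^ 2 / 2 + E + (X ^ 2 * (X ^ 2 + 4 * E)) ^ (1 / 2 : ℂ) / 2)
    (hrm : rm = X ^ 2 / 2 + E - (X ^ 2 * (X ^ 2 + 4 * E)) ^ (1 / 2 : ℂ) / 2) :
    X = 0 ∧ rp = 1 ∧ rm = 1
      ∧ (Mmat l1 l2 k 0)⁻¹ * Nmat l1 l2 k 0 * (Nmat l1 l2 k 0)⁻¹ * Mmat l1 l2 k 0 = 1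
      ∧ max ‖rp‖ ‖rm‖ = 1 :=
  schwarz_no_overlap_stagnates_general μ ρ ω hμ hρ hω Cp Cs hCs k hk l1 l2 hl1 hl2 X E rp rm hX hE
    hrp hrm
end

section
/- Let 0 < Cs < Cp and ω > 0 be real numbers, and for k ∈ (ω/Cp, ω/Cs) define the real function g(k) = 2ω²·√(k² − ω²/Cp²)·(ω²/Cs² − k²) / (Cp²·(k⁴ + (ω²/Cs² − k²)(k² − ω²/Cp²))). Then the supremum of g over the interval (ω/Cp, ω/Cs) equals √2 · Cs · ω · (3Cp² − √(Cp⁴ + 8Cs⁴)) · √(Cp²√(Cp⁴ + 8Cs⁴) − Cp⁴ − 2Cs⁴) / (Cp · (Cp² + Cs²)^{3/2} · (√(Cp⁴ + 8Cs⁴) − Cp²)). -/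
/-!
With `a = (ω/Cp)²`, `b = (ω/Cs)²` and `s = √(k² - a)`, the coefficient becomes
`g = (2ω²/Cp²) · s (c - s²) / (d s² + e)` with `c = b - a`, `d = a + b`, `e = a²`,
a function of `s ∈ (0, √c)`. Its derivative vanishes exactly where `x = s²` solves
`d x² + (c d + 3 e) x - c e = 0`, whose positive root is
`x = ω² (Cp² Q - Cp⁴ - 2 Cs⁴) / (2 Cp² Cs² (Cp² + Cs²))` with `Q = √(Cp⁴ + 8 Cs⁴)`;
the value of `g` there is the stated constant. That this critical point is the global maximum
is a polynomial identity: the gap to the maximum is a multiple of `(s - √x)²`.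
-/

open Real Set

theorem mul_sub_sq_div_le_of_critical {c d e t s : ℝ} (hd : 0 ≤ d) (he : 0 < e) (ht : 0 < t)
    (htc : t ^ 2 ≤ c) (hcrit : d * t ^ 4 + (c * d + 3 * e) * t ^ 2 - c * e = 0) (hs : 0 ≤ s) :
    s * (c - s ^ 2) / (d * s ^ 2 + e) ≤ t * (c - t ^ 2) / (d * t ^ 2 + e) := by
  rw [div_le_div_iff₀ (by positivity) (by positivity), ← sub_nonneg]
  -- The critical-point equation makes the difference factor through `(s - t) ^ 2`.
  have hfactor : t * (t * (c - t ^ 2) * (d * s ^ 2 + e) - s * (c - s ^ 2) * (d * t ^ 2 + e))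
      = (s - t) ^ 2 * ((d * t ^ 2 + e) * t * s + (c - t ^ 2) * e) := by
    linear_combination (s * (s - t)) * hcrit
  refine nonneg_of_mul_nonneg_right (hfactor ▸ ?_) ht
  have : 0 ≤ c - t ^ 2 := sub_nonneg.2 htc
  positivity

theorem sqrt_sub_sq_mul_div_eq {p q k : ℝ} (hk : p ^ 2 ≤ k ^ 2) :
    √(k ^ 2 - p ^ 2) * (q ^ 2 - k ^ 2) / (k ^ 4 + (q ^ 2 - k ^ 2) * (k ^ 2 - p ^ 2))
      = √(k ^ 2 - p ^ 2) * (q ^ 2 - p ^ 2 - √(k ^ 2 - p ^ 2) ^ 2)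
        / ((q ^ 2 + p ^ 2) * √(k ^ 2 - p ^ 2) ^ 2 + p ^ 4) := by
  rw [sq_sqrt (sub_nonneg.2 hk)]
  ring

theorem isGreatest_image_Ioo_of_critical {p q K t : ℝ} (hp : 0 < p) (hpq : p < q) (hK : 0 ≤ K)
    (ht : 0 < t) (htc : t ^ 2 < q ^ 2 - p ^ 2)
    (hcrit : (q ^ 2 + p ^ 2) * t ^ 4 + ((q ^ 2 - p ^ 2) * (q ^ 2 + p ^ 2) + 3 * p ^ 4) * t ^ 2
      - (q ^ 2 - p ^ 2) * p ^ 4 = 0) :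
    IsGreatest ((fun k ↦ K * (√(k ^ 2 - p ^ 2) * (q ^ 2 - k ^ 2)
        / (k ^ 4 + (q ^ 2 - k ^ 2) * (k ^ 2 - p ^ 2)))) '' Ioo p q)
      (K * (t * (q ^ 2 - p ^ 2 - t ^ 2) / ((q ^ 2 + p ^ 2) * t ^ 2 + p ^ 4))) := by
  refine ⟨⟨√(p ^ 2 + t ^ 2), ⟨?_, ?_⟩, ?_⟩, ?_⟩
  · exact lt_sqrt_of_sq_lt (by linarith [pow_pos ht 2])
  · exact (sqrt_lt' (hp.trans hpq)).2 (by linarith)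
  · have hk : p ^ 2 ≤ √(p ^ 2 + t ^ 2) ^ 2 := by
      rw [sq_sqrt (by positivity)]
      linarith [pow_pos ht 2]
    dsimp only
    rw [sqrt_sub_sq_mul_div_eq hk, sq_sqrt (by positivity), add_sub_cancel_left, sqrt_sq ht.le]
  · rintro _ ⟨k, ⟨hpk, hkq⟩, rfl⟩
    have hk : p ^ 2 ≤ k ^ 2 := pow_le_pow_left₀ hp.le hpk.le 2
    dsimp only
    rw [sqrt_sub_sq_mul_div_eq hk]
    exact mul_le_mul_of_nonneg_left (mul_sub_sq_div_le_of_critical (by positivity) (by positivity)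
      ht htc.le hcrit (sqrt_nonneg _)) hK

section ElasticWaveSpeeds

variable {Cp Cs ω Q t : ℝ}

theorem sqrt_pow_four_add_eight_mul_bounds (hCs : 0 < Cs) (hCsCp : Cs < Cp) :
    Cp ^ 2 < √(Cp ^ 4 + 8 * Cs ^ 4) ∧ √(Cp ^ 4 + 8 * Cs ^ 4) < 3 * Cp ^ 2 ∧
      Cp ^ 4 + 2 * Cs ^ 4 < Cp ^ 2 * √(Cp ^ 4 + 8 * Cs ^ 4) := by
  have hCp : 0 < Cp := hCs.trans hCsCp
  have h4 : Cs ^ 4 < Cp ^ 4 := pow_lt_pow_left₀ hCsCp hCs.le four_ne_zero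
  have hQ : √(Cp ^ 4 + 8 * Cs ^ 4) ^ 2 = Cp ^ 4 + 8 * Cs ^ 4 := sq_sqrt (by positivity)
  refine ⟨lt_sqrt_of_sq_lt (by nlinarith [pow_pos hCs 4]),
    (sqrt_lt' (by positivity)).2 (by nlinarith), lt_of_pow_lt_pow_left₀ 2 (by positivity) ?_⟩
  rw [mul_pow, hQ]
  nlinarith [pow_pos hCs 4]

section CriticalPoint

variable (hCp : 0 < Cp) (hCs : 0 < Cs)
  (ht : t ^ 2 = ω ^ 2 * (Cp ^ 2 * Q - Cp ^ 4 - 2 * Cs ^ 4)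
    / (2 * Cp ^ 2 * Cs ^ 2 * (Cp ^ 2 + Cs ^ 2)))
include hCp hCs ht

theorem critical_point_eq_zero (hQ : Q ^ 2 = Cp ^ 4 + 8 * Cs ^ 4) :
    ((ω / Cs) ^ 2 + (ω / Cp) ^ 2) * t ^ 4
      + (((ω / Cs) ^ 2 - (ω / Cp) ^ 2) * ((ω / Cs) ^ 2 + (ω / Cp) ^ 2) + 3 * (ω / Cp) ^ 4) * t ^ 2
      - ((ω / Cs) ^ 2 - (ω / Cp) ^ 2) * (ω / Cp) ^ 4 = 0 := by
  rw [show t ^ 4 = (t ^ 2) ^ 2 by ring, ht]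
  linear_combination (norm := (field_simp; ring))
    (ω ^ 6 / (4 * Cp ^ 2 * Cs ^ 6 * (Cp ^ 2 + Cs ^ 2))) * hQ

theorem sub_sq_eq :
    (ω / Cs) ^ 2 - (ω / Cp) ^ 2 - t ^ 2
      = ω ^ 2 * (3 * Cp ^ 2 - Q) / (2 * Cs ^ 2 * (Cp ^ 2 + Cs ^ 2)) := by
  rw [ht]
  field_simp
  ring

theorem add_sq_mul_sq_add_eq :
    ((ω / Cs) ^ 2 + (ω / Cp) ^ 2) * t ^ 2 + (ω / Cp) ^ 4
      = ω ^ 4 * (Q - Cp ^ 2) / (2 * Cp ^ 2 * Cs ^ 4) := by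
  rw [ht]
  field_simp
  ring

theorem sq_lt_sub_sq (hω : 0 < ω) (hQ : Q < 3 * Cp ^ 2) : t ^ 2 < (ω / Cs) ^ 2 - (ω / Cp) ^ 2 := by
  rw [← sub_pos, sub_sq_eq hCp hCs ht]
  exact div_pos (mul_pos (by positivity) (by linarith)) (by positivity)

theorem first_order_coefficient_at_critical_point (hω : ω ≠ 0) (hQ : Q - Cp ^ 2 ≠ 0) :
    2 * ω ^ 2 / Cp ^ 2 * (t * ((ω / Cs) ^ 2 - (ω / Cp) ^ 2 - t ^ 2)
      / (((ω / Cs) ^ 2 + (ω / Cp) ^ 2) * t ^ 2 + (ω / Cp) ^ 4))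
      = 2 * Cs ^ 2 * (3 * Cp ^ 2 - Q) * t / ((Cp ^ 2 + Cs ^ 2) * (Q - Cp ^ 2)) := by
  rw [sub_sq_eq hCp hCs ht, add_sq_mul_sq_add_eq hCp hCs ht]
  field_simp

end CriticalPoint

theorem critical_point_sq {R : ℝ} (hCp : 0 < Cp) (hCs : 0 < Cs) (hR : 0 ≤ R) :
    (√2 * ω * √R / (2 * Cp * Cs * √(Cp ^ 2 + Cs ^ 2))) ^ 2
      = ω ^ 2 * R / (2 * Cp ^ 2 * Cs ^ 2 * (Cp ^ 2 + Cs ^ 2)) := by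
  rw [div_pow, mul_pow, mul_pow, mul_pow, sq_sqrt zero_le_two, sq_sqrt hR,
    sq_sqrt (by positivity)]
  field_simp

end ElasticWaveSpeeds

/-- the supremum over the interval of divergent Fourier frequencies
`(ω/Cp, ω/Cs)` of the first-order coefficient
`g(k) = 2ω²·√(k² − ω²/Cp²)·(ω²/Cs² − k²) / (Cp²·(k⁴ + (ω²/Cs² − k²)(k² − ω²/Cp²)))`
equals the explicit constant
`√2·Cs·ω·(3Cp² − √(Cp⁴+8Cs⁴))·√(Cp²√(Cp⁴+8Cs⁴) − Cp⁴ − 2Cs⁴)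
    / (Cp·(Cp²+Cs²)^{3/2}·(√(Cp⁴+8Cs⁴) − Cp²))`. -/
theorem sup_first_order_coefficient
    (Cp Cs ω : ℝ) (hCs : 0 < Cs) (hCsCp : Cs < Cp) (hω : 0 < ω)
    (g : ℝ → ℝ)
    (hg : ∀ k ∈ Set.Ioo (ω / Cp) (ω / Cs), g k =
        2 * ω ^ 2 * Real.sqrt (k ^ 2 - ω ^ 2 / Cp ^ 2) * (ω ^ 2 / Cs ^ 2 - k ^ 2)
          / (Cp ^ 2 * (k ^ 4 + (ω ^ 2 / Cs ^ 2 - k ^ 2) * (k ^ 2 - ω ^ 2 / Cp ^ 2)))) :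
    sSup (g '' Set.Ioo (ω / Cp) (ω / Cs))
      = Real.sqrt 2 * Cs * ω * (3 * Cp ^ 2 - Real.sqrt (Cp ^ 4 + 8 * Cs ^ 4))
          * Real.sqrt (Cp ^ 2 * Real.sqrt (Cp ^ 4 + 8 * Cs ^ 4) - Cp ^ 4 - 2 * Cs ^ 4)
          / (Cp * (Cp ^ 2 + Cs ^ 2) ^ ((3 : ℝ) / 2)
              * (Real.sqrt (Cp ^ 4 + 8 * Cs ^ 4) - Cp ^ 2)) := by
  have hCp : 0 < Cp := hCs.trans hCsCp
  obtain ⟨hQlo, hQhi, hR⟩ := sqrt_pow_four_add_eight_mul_bounds hCs hCsCp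
  set Q := √(Cp ^ 4 + 8 * Cs ^ 4)
  set t := √2 * ω * √(Cp ^ 2 * Q - Cp ^ 4 - 2 * Cs ^ 4) / (2 * Cp * Cs * √(Cp ^ 2 + Cs ^ 2))
    with htdef
  have ht : t ^ 2 = ω ^ 2 * (Cp ^ 2 * Q - Cp ^ 4 - 2 * Cs ^ 4)
      / (2 * Cp ^ 2 * Cs ^ 2 * (Cp ^ 2 + Cs ^ 2)) := critical_point_sq hCp hCs (by linarith)
  have ht0 : 0 < t :=
    div_pos (mul_pos (mul_pos (sqrt_pos.2 two_pos) hω) (sqrt_pos.2 (by linarith))) (by positivity)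
  have hmax := isGreatest_image_Ioo_of_critical (K := 2 * ω ^ 2 / Cp ^ 2) (div_pos hω hCp)
    (div_lt_div_of_pos_left hω hCs hCsCp) (by positivity) ht0 (sq_lt_sub_sq hCp hCs ht hω hQhi)
    (critical_point_eq_zero hCp hCs ht (sq_sqrt (by positivity)))
  have hg' : EqOn g (fun k ↦ 2 * ω ^ 2 / Cp ^ 2 * (√(k ^ 2 - (ω / Cp) ^ 2)
      * ((ω / Cs) ^ 2 - k ^ 2) / (k ^ 4 + ((ω / Cs) ^ 2 - k ^ 2) * (k ^ 2 - (ω / Cp) ^ 2))))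
      (Ioo (ω / Cp) (ω / Cs)) :=
    fun k hk ↦ by rw [hg k hk, div_pow, div_pow, mul_assoc (2 * ω ^ 2), mul_div_mul_comm]
  rw [hg'.image_eq, hmax.csSup_eq,
    first_order_coefficient_at_critical_point hCp hCs ht hω.ne' (by linarith), htdef,
    show (3 : ℝ) / 2 = 1 + 1 / 2 by norm_num, rpow_add (by positivity), rpow_one, ← sqrt_eq_rpow]
  have hW : 0 < √(Cp ^ 2 + Cs ^ 2) := sqrt_pos.2 (by positivity)
  field_simp
end
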